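/- If π and π' are the stationary distributions of Google matrices G = gA + (1-g)K and G' = gA' + (1-g)K built from stochastic matrices A and A', then ‖π - π'‖_1 ≤ g/(1-g) · max_x ‖A_x - A'_x‖_1, where A_x denotes the x-th row; i.e., PageRank is stable under perturbations of the transition matrix. -/

import Mathlib

open Finset Matrix

/-- A stochastic matrix: nonnegative entries with each row summing to 1. -/
def IsStochastic {m : ℕ} (A : Matrix (Fin m) (Fin m) ℝ) : Prop :=
  (∀ x y, 0 ≤ A x y) ∧ ∀ x, ∑ y, A x y = 1

/-- A probability (row) vector: nonnegative entries summing to 1. -/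
def IsProbVec {m : ℕ} (v : Fin m → ℝ) : Prop :=
  (∀ x, 0 ≤ v x) ∧ ∑ x, v x = 1

/-- The Google matrix G = g·A + (1-g)·K, where K has all entries 1/m. -/
noncomputable def googleMatrix {m : ℕ} (A : Matrix (Fin m) (Fin m) ℝ) (g : ℝ) :
    Matrix (Fin m) (Fin m) ℝ :=
  g • A + (1 - g) • Matrix.of (fun _ _ : Fin m => (1 : ℝ) / m)

/-!
Since `π` and `π'` both sum to `1`, their teleportation terms `(1 - g) / m` coincide, so
`π - π' = g ((π - π') A + π' (A - A'))`. A stochastic matrix does not increase the `ℓ¹` norm of a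
row vector, and `π' (A - A')` has `ℓ¹` norm at most the `π'`-average of the row distances
`‖A_x - A'_x‖₁`. Hence `‖π - π'‖₁ ≤ g ‖π - π'‖₁ + g max_x ‖A_x - A'_x‖₁`.
-/

theorem sum_abs_vecMul_le {ι κ : Type*} [Fintype ι] [Fintype κ] (v : ι → ℝ) (B : Matrix ι κ ℝ) :
    ∑ x, |(v ᵥ* B) x| ≤ ∑ y, |v y| * ∑ x, |B y x| := calc
  ∑ x, |(v ᵥ* B) x| ≤ ∑ x, ∑ y, |v y| * |B y x| := by
    gcongr with x
    simpa only [vecMul, dotProduct, abs_mul] using abs_sum_le_sum_abs (fun y => v y * B y x) _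
  _ = ∑ y, |v y| * ∑ x, |B y x| := by
    rw [sum_comm]
    simp only [mul_sum]

variable {m : ℕ}

theorem IsStochastic.sum_abs_vecMul_le_sum_abs {A : Matrix (Fin m) (Fin m) ℝ} (hA : IsStochastic A)
    (v : Fin m → ℝ) : ∑ x, |(v ᵥ* A) x| ≤ ∑ y, |v y| := by
  refine (sum_abs_vecMul_le v A).trans_eq (sum_congr rfl fun y _ => ?_)
  simp only [abs_of_nonneg (hA.1 y _), hA.2 y, mul_one]

theorem IsProbVec.sum_abs_vecMul_le_iSup {p : Fin m → ℝ} (hp : IsProbVec p)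
    (B : Matrix (Fin m) (Fin m) ℝ) : ∑ x, |(p ᵥ* B) x| ≤ ⨆ y, ∑ x, |B y x| := calc
  ∑ x, |(p ᵥ* B) x| ≤ ∑ y, p y * ⨆ y, ∑ x, |B y x| := by
    refine (sum_abs_vecMul_le p B).trans (sum_le_sum fun y _ => ?_)
    rw [abs_of_nonneg (hp.1 y)]
    exact mul_le_mul_of_nonneg_left
      (le_ciSup (Set.finite_range fun y => ∑ x, |B y x|).bddAbove y) (hp.1 y)
  _ = ⨆ y, ∑ x, |B y x| := by rw [← sum_mul, hp.2, one_mul]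

theorem vecMul_googleMatrix (v : Fin m → ℝ) (A : Matrix (Fin m) (Fin m) ℝ) (g : ℝ) :
    v ᵥ* googleMatrix A g = g • (v ᵥ* A) + Function.const _ ((1 - g) / m * ∑ y, v y) := by
  ext x
  simp only [googleMatrix, vecMul, dotProduct, Matrix.add_apply, Matrix.smul_apply, of_apply,
    smul_eq_mul, Pi.add_apply, Pi.smul_apply, Function.const_apply, mul_add, sum_add_distrib, mul_sum]
  congr 1 <;> exact sum_congr rfl fun _ _ => by ring

theorem google_pagerank_stability_general {m : ℕ} (A A' : Matrix (Fin m) (Fin m) ℝ)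
    (hA : IsStochastic A)
    (g : ℝ) (hg0 : 0 ≤ g) (hg1 : g < 1)
    (π π' : Fin m → ℝ) (hπ : IsProbVec π) (hπ' : IsProbVec π')
    (hstat : Matrix.vecMul π (googleMatrix A g) = π)
    (hstat' : Matrix.vecMul π' (googleMatrix A' g) = π') :
    ∑ x, |π x - π' x| ≤ g / (1 - g) * ⨆ x : Fin m, ∑ y, |A x y - A' x y| := by
  set D := ∑ x, |π x - π' x|
  set M := ⨆ x : Fin m, ∑ y, |A x y - A' x y|
  have hdiff : π - π' = g • ((π - π') ᵥ* A + π' ᵥ* (A - A')) := by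
    conv_lhs => rw [← hstat, ← hstat', vecMul_googleMatrix, vecMul_googleMatrix, hπ.2, hπ'.2]
    simp only [sub_vecMul, vecMul_sub]
    module
  have hD : D ≤ g * (D + M) := calc
    D = g * ∑ x, |((π - π') ᵥ* A + π' ᵥ* (A - A')) x| := by
      have hpt (x : Fin m) := congrFun hdiff x
      simp only [Pi.sub_apply, Pi.smul_apply, smul_eq_mul] at hpt
      simp only [D, hpt, abs_mul, abs_of_nonneg hg0, mul_sum]
    _ ≤ g * (∑ x, |((π - π') ᵥ* A) x| + ∑ x, |(π' ᵥ* (A - A')) x|) := by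
      rw [← sum_add_distrib]
      gcongr
      exact abs_add_le _ _
    _ ≤ g * (D + M) := by
      gcongr
      · exact hA.sum_abs_vecMul_le_sum_abs _
      · exact hπ'.sum_abs_vecMul_le_iSup _
  rw [div_mul_eq_mul_div, le_div_iff₀ (sub_pos.2 hg1)]
  linarith

/-- PageRank stability under perturbation of the transition matrix. -/
theorem google_pagerank_stability {m : ℕ} (A A' : Matrix (Fin m) (Fin m) ℝ)
    (hA : IsStochastic A) (hA' : IsStochastic A')
    (g : ℝ) (hg0 : 0 ≤ g) (hg1 : g < 1)
    (π π' : Fin m → ℝ) (hπ : IsProbVec π) (hπ' : IsProbVec π')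
    (hstat : Matrix.vecMul π (googleMatrix A g) = π)
    (hstat' : Matrix.vecMul π' (googleMatrix A' g) = π') :
    ∑ x, |π x - π' x| ≤ g / (1 - g) * ⨆ x : Fin m, ∑ y, |A x y - A' x y| :=
  google_pagerank_stability_general A A' hA g hg0 hg1 π π' hπ hπ' hstat hstat'
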